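/- arXiv:2602.06188 — 6 statements merged into one kernel-verified Lean document; each statement's English description precedes it below -/
import Mathlib

section
/- Let A be a type with a binary multiplication · and a unary operation ⁻¹, and let ⊙ be a partition function on A, i.e. a binary operation satisfying: (PF1) a ⊙ a = a; (PF2) a ⊙ (b ⊙ c) = (a ⊙ b) ⊙ c; (PF3) a ⊙ (b ⊙ c) = a ⊙ (c ⊙ b); (PF4) (a·b) ⊙ c = (a ⊙ c)·(b ⊙ c) and a⁻¹ ⊙ c = (a ⊙ c)⁻¹; (PF5) c ⊙ (a·b) = (c ⊙ a) ⊙ b and c ⊙ (a⁻¹) = c ⊙ a. Then the binary relation ~ on A defined by a ~ b if and only if a ⊙ b = a and b ⊙ a = b, is an equivalence relation. -/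
section MutualAbsorption

variable {A : Type*} {odot : A → A → A}

theorem absorbs_trans (hassoc : ∀ a b c, odot a (odot b c) = odot (odot a b) c) {a b c : A}
    (hab : odot a b = a) (hbc : odot b c = b) : odot a c = a :=
  calc odot a c = odot (odot a b) c := by rw [hab]
    _ = odot a (odot b c) := (hassoc a b c).symm
    _ = a := by rw [hbc, hab]

theorem equivalence_mutualAbsorption (hidem : ∀ a, odot a a = a)
    (hassoc : ∀ a b c, odot a (odot b c) = odot (odot a b) c) :
    Equivalence (fun a b => odot a b = a ∧ odot b a = b) where
  refl a := ⟨hidem a, hidem a⟩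
  symm := fun ⟨hab, hba⟩ => ⟨hba, hab⟩
  trans := fun ⟨hab, hba⟩ ⟨hbc, hcb⟩ =>
    ⟨absorbs_trans hassoc hab hbc, absorbs_trans hassoc hcb hba⟩

end MutualAbsorption

theorem plonka_relation_equivalence_general {A : Type*}
    (odot : A → A → A)
    (PF1 : ∀ a, odot a a = a)
    (PF2 : ∀ a b c, odot a (odot b c) = odot (odot a b) c) :
    Equivalence (fun a b => odot a b = a ∧ odot b a = b) :=
  equivalence_mutualAbsorption PF1 PF2

/-- Part (1) of Płonka's decomposition theorem for the signature `{·, ⁻¹}`: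
if `⊙` is a partition function on `A`, then the relation
`a ~ b ↔ a ⊙ b = a ∧ b ⊙ a = b` is an equivalence relation. -/
theorem plonka_relation_equivalence {A : Type*} (mul : A → A → A) (inv : A → A)
    (odot : A → A → A)
    (PF1 : ∀ a, odot a a = a)
    (PF2 : ∀ a b c, odot a (odot b c) = odot (odot a b) c)
    (PF3 : ∀ a b c, odot a (odot b c) = odot a (odot c b))
    (PF4mul : ∀ a b c, odot (mul a b) c = mul (odot a c) (odot b c))
    (PF4inv : ∀ a c, odot (inv a) c = inv (odot a c))
    (PF5mul : ∀ c a b, odot c (mul a b) = odot (odot c a) b)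
    (PF5inv : ∀ c a, odot c (inv a) = odot c a) :
    Equivalence (fun a b => odot a b = a ∧ odot b a = b) :=
  plonka_relation_equivalence_general odot PF1 PF2
end

section
/- Let A be a type with a binary multiplication · and a unary operation ⁻¹, and let ⊙ be a partition function on A (a binary operation satisfying PF1–PF5). Let ~ be the relation defined by a ~ b iff a ⊙ b = a and b ⊙ a = b. Then: (i) ~ is compatible with ⊙, i.e. if a ~ a' and b ~ b' then (a ⊙ b) ~ (a' ⊙ b'); (ii) a ⊙ b ~ b ⊙ a for all a, b; (iii) a ⊙ (b ⊙ c) = (a ⊙ b) ⊙ c and a ⊙ a = a. Consequently the quotient A/~ with the induced operation [a] ⊔ [b] := [a ⊙ b] is a well-defined commutative, associative and idempotent binary operation, i.e. A/~ is a join-semilattice. -/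
/-! Axioms PF1–PF3 say that `⊙` is a left normal band, so it satisfies the right commutativity
`(a ⊙ b) ⊙ c = (a ⊙ c) ⊙ b`. Together with idempotence this lets `⊙` absorb any right factor `b`
with `a ⊙ b = a`, which gives both the compatibility of `~` and `a ⊙ b ~ b ⊙ a`. The quotient
operation is then well defined, and commutative, associative and idempotent. -/

structure IsLeftNormalBand {A : Type*} (op : A → A → A) : Prop where
  idem : ∀ a, op a a = a
  assoc : ∀ a b c, op a (op b c) = op (op a b) c
  left_normal : ∀ a b c, op a (op b c) = op a (op c b)

namespace IsLeftNormalBand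

variable {A : Type*} {op : A → A → A}

theorem right_comm (h : IsLeftNormalBand op) (a b c : A) :
    op (op a b) c = op (op a c) b := by
  rw [← h.assoc, h.left_normal, h.assoc]

theorem op_op_eq_of_op_eq (h : IsLeftNormalBand op) {a a' b b' : A}
    (ha : op a a' = a) (hb : op b b' = b) : op (op a b) (op a' b') = op a b :=
  calc op (op a b) (op a' b')
      = op (op (op a a') b) b' := by rw [h.assoc, h.right_comm a b a']
    _ = op a b := by rw [ha, ← h.assoc, hb]

theorem op_op_swap (h : IsLeftNormalBand op) (a b : A) : op (op a b) (op b a) = op a b :=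
  calc op (op a b) (op b a)
      = op (op (op a b) b) a := h.assoc _ _ _
    _ = op (op a b) a := by rw [← h.assoc a b b, h.idem]
    _ = op a b := by rw [h.right_comm, h.idem]

def setoid (h : IsLeftNormalBand op) : Setoid A where
  r a b := op a b = a ∧ op b a = b
  iseqv :=
    { refl a := ⟨h.idem a, h.idem a⟩
      symm hab := hab.symm
      trans {a b c} hab hbc :=
        ⟨by rw [← hab.1, ← h.assoc, hbc.1], by rw [← hbc.2, ← h.assoc, hab.2]⟩ }

theorem setoid_r_op (h : IsLeftNormalBand op) {a a' b b' : A}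
    (ha : h.setoid a a') (hb : h.setoid b b') : h.setoid (op a b) (op a' b') :=
  ⟨h.op_op_eq_of_op_eq ha.1 hb.1, h.op_op_eq_of_op_eq ha.2 hb.2⟩

theorem setoid_r_op_swap (h : IsLeftNormalBand op) (a b : A) : h.setoid (op a b) (op b a) :=
  ⟨h.op_op_swap a b, h.op_op_swap b a⟩

abbrev semilatticeSup (h : IsLeftNormalBand op) : SemilatticeSup (Quotient h.setoid) :=
  letI : Max (Quotient h.setoid) := ⟨Quotient.map₂ op fun _ _ ha _ _ hb => h.setoid_r_op ha hb⟩
  SemilatticeSup.mk'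
    (fun x y => Quotient.inductionOn₂ x y fun a b => Quotient.sound (h.setoid_r_op_swap a b))
    (fun x y z => Quotient.inductionOn₃ x y z fun a b c =>
      congrArg (Quotient.mk _) (h.assoc a b c).symm)
    (fun x => Quotient.inductionOn x fun a => congrArg (Quotient.mk _) (h.idem a))

end IsLeftNormalBand

theorem plonka_quotient_semilattice_general {A : Type*}
    (odot : A → A → A)
    (PF1 : ∀ a, odot a a = a)
    (PF2 : ∀ a b c, odot a (odot b c) = odot (odot a b) c)
    (PF3 : ∀ a b c, odot a (odot b c) = odot a (odot c b)) :
    -- (i) ~ is compatible with ⊙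
    (∀ a a' b b', (odot a a' = a ∧ odot a' a = a') → (odot b b' = b ∧ odot b' b = b') →
      (odot (odot a b) (odot a' b') = odot a b ∧ odot (odot a' b') (odot a b) = odot a' b')) ∧
    -- (ii) a ⊙ b ~ b ⊙ a
    (∀ a b, odot (odot a b) (odot b a) = odot a b ∧ odot (odot b a) (odot a b) = odot b a) ∧
    -- (iii) associativity and idempotency of ⊙
    (∀ a b c, odot a (odot b c) = odot (odot a b) c) ∧ (∀ a, odot a a = a) ∧
    -- consequently: the quotient is a join-semilattice
    (∃ s : Setoid A, (∀ a b, s.r a b ↔ (odot a b = a ∧ odot b a = b)) ∧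
      ∃ join : Quotient s → Quotient s → Quotient s,
        (∀ a b, join (Quotient.mk s a) (Quotient.mk s b) = Quotient.mk s (odot a b)) ∧
        (∀ x y, join x y = join y x) ∧
        (∀ x y z, join x (join y z) = join (join x y) z) ∧
        (∀ x, join x x = x)) := by
  have h : IsLeftNormalBand odot := ⟨PF1, PF2, PF3⟩
  let _ := h.semilatticeSup
  exact ⟨fun _ _ _ _ => h.setoid_r_op, h.setoid_r_op_swap, PF2, PF1,
    h.setoid, fun _ _ => Iff.rfl, (· ⊔ ·), fun _ _ => rfl, sup_comm,
    fun x y z => (sup_assoc x y z).symm, sup_idem⟩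

/-- Part (2) of Płonka's decomposition theorem for the signature `{·, ⁻¹}`:
the relation `~` is compatible with `⊙`, `a ⊙ b ~ b ⊙ a`, `⊙` is associative and
idempotent, and consequently the quotient `A/~` with `[a] ⊔ [b] := [a ⊙ b]` is a
well-defined commutative, associative, idempotent operation (a join-semilattice). -/
theorem plonka_quotient_semilattice {A : Type*} (mul : A → A → A) (inv : A → A)
    (odot : A → A → A)
    (PF1 : ∀ a, odot a a = a)
    (PF2 : ∀ a b c, odot a (odot b c) = odot (odot a b) c)
    (PF3 : ∀ a b c, odot a (odot b c) = odot a (odot c b))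
    (PF4mul : ∀ a b c, odot (mul a b) c = mul (odot a c) (odot b c))
    (PF4inv : ∀ a c, odot (inv a) c = inv (odot a c))
    (PF5mul : ∀ c a b, odot c (mul a b) = odot (odot c a) b)
    (PF5inv : ∀ c a, odot c (inv a) = odot c a) :
    -- (i) ~ is compatible with ⊙
    (∀ a a' b b', (odot a a' = a ∧ odot a' a = a') → (odot b b' = b ∧ odot b' b = b') →
      (odot (odot a b) (odot a' b') = odot a b ∧ odot (odot a' b') (odot a b) = odot a' b')) ∧
    -- (ii) a ⊙ b ~ b ⊙ a
    (∀ a b, odot (odot a b) (odot b a) = odot a b ∧ odot (odot b a) (odot a b) = odot b a) ∧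
    -- (iii) associativity and idempotency of ⊙
    (∀ a b c, odot a (odot b c) = odot (odot a b) c) ∧ (∀ a, odot a a = a) ∧
    -- consequently: the quotient is a join-semilattice
    (∃ s : Setoid A, (∀ a b, s.r a b ↔ (odot a b = a ∧ odot b a = b)) ∧
      ∃ join : Quotient s → Quotient s → Quotient s,
        (∀ a b, join (Quotient.mk s a) (Quotient.mk s b) = Quotient.mk s (odot a b)) ∧
        (∀ x y, join x y = join y x) ∧
        (∀ x y z, join x (join y z) = join (join x y) z) ∧
        (∀ x, join x x = x)) :=
  plonka_quotient_semilattice_general odot PF1 PF2 PF3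
end

section
/- Let B be a type with binary operations ∨ and ∧, a unary operation ¬, and constants 0 and 1 satisfying: (1) x∨x = x; (2) x∨y = y∨x; (3) x∨(y∨z) = (x∨y)∨z; (4) ¬¬x = x; (5) x∧y = ¬(¬x ∨ ¬y); (6) x∧(¬x ∨ y) = x∧y; (7) 0∨x = x; (8) 1 = ¬0, together with the absorption identity x = x ∨ (x ∧ y). Then B admits a Boolean algebra structure whose join is ∨, whose meet is ∧, whose complement is ¬, whose least element is 0 and whose greatest element is 1. -/
/-!
Absorption and its De Morgan dual make `∨` and `∧` a lattice, and then identity (6) says that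
`(· ∧ a)` is left adjoint to `(¬a ∨ ·)`: `c ∧ a ≤ b ↔ c ≤ ¬a ∨ b`. A left adjoint preserves joins,
which is distributivity, and the adjunction at `0`, `x` and `¬x` yields the bounds and complement laws.
-/

abbrev Lattice.ofDeMorgan {α : Type*} [Max α] [Min α] [Compl α]
    (sup_comm : ∀ a b : α, a ⊔ b = b ⊔ a) (sup_assoc : ∀ a b c : α, a ⊔ (b ⊔ c) = a ⊔ b ⊔ c)
    (compl_compl : ∀ a : α, aᶜᶜ = a) (inf_eq_compl_sup_compl : ∀ a b : α, a ⊓ b = (aᶜ ⊔ bᶜ)ᶜ)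
    (sup_inf_self : ∀ a b : α, a ⊔ a ⊓ b = a) : Lattice α :=
  have compl_inf : ∀ a b : α, (a ⊓ b)ᶜ = aᶜ ⊔ bᶜ := fun a b => by
    rw [inf_eq_compl_sup_compl, compl_compl]
  Lattice.mk' sup_comm (fun a b c => (sup_assoc a b c).symm)
    (fun a b => by rw [inf_eq_compl_sup_compl, inf_eq_compl_sup_compl, sup_comm])
    (fun a b c => by
      rw [inf_eq_compl_sup_compl, compl_inf, ← sup_assoc, ← compl_inf, ← inf_eq_compl_sup_compl])
    sup_inf_self
    (fun a b => by
      have compl_sup : (a ⊔ b)ᶜ = aᶜ ⊓ bᶜ := by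
        rw [inf_eq_compl_sup_compl, compl_compl, compl_compl]
      rw [inf_eq_compl_sup_compl, compl_sup, sup_inf_self, compl_compl])

section InfComplSup

variable {α : Type*} [Lattice α] [Compl α]

theorem compl_sup_inf_eq_compl_sup (compl_compl : ∀ a : α, aᶜᶜ = a)
    (inf_eq_compl_sup_compl : ∀ a b : α, a ⊓ b = (aᶜ ⊔ bᶜ)ᶜ)
    (inf_compl_sup : ∀ a b : α, a ⊓ (aᶜ ⊔ b) = a ⊓ b) (a b : α) : aᶜ ⊔ a ⊓ b = aᶜ ⊔ b := by
  have compl_inf : ∀ a b : α, (a ⊓ b)ᶜ = aᶜ ⊔ bᶜ := fun a b => by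
    rw [inf_eq_compl_sup_compl, compl_compl]
  have h := congrArg compl (inf_compl_sup a bᶜ)
  rwa [compl_inf, compl_inf, ← inf_eq_compl_sup_compl, compl_compl] at h

theorem gc_inf_compl_sup (compl_compl : ∀ a : α, aᶜᶜ = a)
    (inf_eq_compl_sup_compl : ∀ a b : α, a ⊓ b = (aᶜ ⊔ bᶜ)ᶜ)
    (inf_compl_sup : ∀ a b : α, a ⊓ (aᶜ ⊔ b) = a ⊓ b) (a : α) :
    GaloisConnection (· ⊓ a) (aᶜ ⊔ ·) := by
  intro c b
  constructor
  · intro h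
    calc c ≤ aᶜ ⊔ c := le_sup_right
      _ = aᶜ ⊔ a ⊓ c :=
        (compl_sup_inf_eq_compl_sup compl_compl inf_eq_compl_sup_compl inf_compl_sup a c).symm
      _ ≤ aᶜ ⊔ b := sup_le_sup_left (inf_comm a c ▸ h) _
  · intro h
    calc c ⊓ a ≤ a ⊓ (aᶜ ⊔ b) := inf_comm c a ▸ inf_le_inf_left a h
      _ = a ⊓ b := inf_compl_sup a b
      _ ≤ b := inf_le_right

end InfComplSup

/-- The top element is `⊥ᶜ`. -/
abbrev BooleanAlgebra.ofInfComplSup {α : Type*} [Lattice α] [OrderBot α] [Compl α]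
    (compl_compl : ∀ a : α, aᶜᶜ = a) (inf_eq_compl_sup_compl : ∀ a b : α, a ⊓ b = (aᶜ ⊔ bᶜ)ᶜ)
    (inf_compl_sup : ∀ a b : α, a ⊓ (aᶜ ⊔ b) = a ⊓ b) : BooleanAlgebra α :=
  have gc := gc_inf_compl_sup compl_compl inf_eq_compl_sup_compl inf_compl_sup
  { DistribLattice.ofInfSupLe fun a b c => by
      rw [inf_comm a, inf_comm a, inf_comm a, (gc a).l_sup],
    ‹OrderBot α› with
    top := ⊥ᶜ
    inf_compl_le_bot := fun a => (gc aᶜ).l_le (by rw [compl_compl, sup_bot_eq])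
    top_le_sup_compl := fun a => sup_comm aᶜ a ▸ (gc a).le_u inf_le_right
    le_top := fun a => sup_bot_eq (⊥ᶜ : α) ▸ (gc ⊥).le_u inf_le_right }

theorem involutive_bisemilattice_plus_absorption_is_boolean_general {B : Type*}
    (join meet : B → B → B) (neg : B → B) (zero one : B)
    (h2 : ∀ x y, join x y = join y x)
    (h3 : ∀ x y z, join x (join y z) = join (join x y) z)
    (h4 : ∀ x, neg (neg x) = x)
    (h5 : ∀ x y, meet x y = neg (join (neg x) (neg y)))
    (h6 : ∀ x y, meet x (join (neg x) y) = meet x y)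
    (h7 : ∀ x, join zero x = x)
    (h8 : one = neg zero)
    (habs : ∀ x y, x = join x (meet x y)) :
    ∃ ba : BooleanAlgebra B,
      (∀ x y : B, (letI := ba; x ⊔ y) = join x y) ∧
      (∀ x y : B, (letI := ba; x ⊓ y) = meet x y) ∧
      (∀ x : B, (letI := ba; xᶜ) = neg x) ∧
      ((letI := ba; (⊥ : B)) = zero) ∧
      ((letI := ba; (⊤ : B)) = one) := by
  let : Max B := ⟨join⟩
  let : Min B := ⟨meet⟩
  let : Compl B := ⟨neg⟩
  let : Lattice B := Lattice.ofDeMorgan h2 h3 h4 h5 fun x y => (habs x y).symm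
  let : OrderBot B := { bot := zero, bot_le := fun x => sup_eq_right.mp (h7 x) }
  exact ⟨BooleanAlgebra.ofInfComplSup h4 h5 h6, fun _ _ => rfl, fun _ _ => rfl, fun _ => rfl,
    rfl, h8.symm⟩

/-- Adding the absorption identity `x = x ∨ (x ∧ y)` to the involutive bisemilattice
axioms (1)–(8) yields an equational basis for Boolean algebras: such a type admits a
Boolean algebra structure with the given join, meet, complement, bottom and top. -/
theorem involutive_bisemilattice_plus_absorption_is_boolean {B : Type*}
    (join meet : B → B → B) (neg : B → B) (zero one : B)
    (h1 : ∀ x, join x x = x)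
    (h2 : ∀ x y, join x y = join y x)
    (h3 : ∀ x y z, join x (join y z) = join (join x y) z)
    (h4 : ∀ x, neg (neg x) = x)
    (h5 : ∀ x y, meet x y = neg (join (neg x) (neg y)))
    (h6 : ∀ x y, meet x (join (neg x) y) = meet x y)
    (h7 : ∀ x, join zero x = x)
    (h8 : one = neg zero)
    (habs : ∀ x y, x = join x (meet x y)) :
    ∃ ba : BooleanAlgebra B,
      (∀ x y : B, (letI := ba; x ⊔ y) = join x y) ∧
      (∀ x y : B, (letI := ba; x ⊓ y) = meet x y) ∧
      (∀ x : B, (letI := ba; xᶜ) = neg x) ∧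
      ((letI := ba; (⊥ : B)) = zero) ∧
      ((letI := ba; (⊤ : B)) = one) :=
  involutive_bisemilattice_plus_absorption_is_boolean_general join meet neg zero one h2 h3 h4 h5 h6
    h7 h8 habs
end

section
/- Let θ be a congruence on the Płonka sum A of a semilattice direct system of groups. Then: (a) for every (i,j) ∈ S_θ and every a ∈ G i, the pair ⟨i,a⟩ and ⟨i⊔j, p_{i,i⊔j}(a)⟩ are θ-related; (b) S_θ is reflexive and symmetric; (c) S_θ is closed under componentwise joins: if (i,j) ∈ S_θ and (u,v) ∈ S_θ then (i⊔u, j⊔v) ∈ S_θ; (d) S_θ is upper transitive: if (i,j) ∈ S_θ and (j,k) ∈ S_θ then (i, i⊔k) ∈ S_θ. -/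
/-! Płonka sum of a semilattice direct system of groups.

`I` is a join-semilattice, `G i` are groups, and `p i j h : G i →* G j` (for `h : i ≤ j`)
are the transition homomorphisms. The Płonka sum is the sigma type `Σ i, G i` with
multiplication `⟨i,a⟩·⟨j,b⟩ = ⟨i⊔j, p_{i,i⊔j}(a) · p_{j,i⊔j}(b)⟩` and inversion
`⟨i,a⟩⁻¹ = ⟨i,a⁻¹⟩` (a Clifford semigroup). -/

variable {I : Type*} [SemilatticeSup I] {G : I → Type*} [∀ i, Group (G i)]

/-- Multiplication of the Płonka sum. -/
def pmul (p : ∀ i j : I, i ≤ j → (G i →* G j)) (x y : Σ i, G i) : Σ i, G i :=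
  ⟨x.1 ⊔ y.1, p x.1 (x.1 ⊔ y.1) le_sup_left x.2 * p y.1 (x.1 ⊔ y.1) le_sup_right y.2⟩

/-- Inversion of the Płonka sum. -/
def pinv (x : Σ i, G i) : Σ i, G i := ⟨x.1, x.2⁻¹⟩

/-- `θ` is a congruence on the Płonka sum: an equivalence relation compatible with
multiplication and inversion. -/
def IsCong (p : ∀ i j : I, i ≤ j → (G i →* G j))
    (θ : (Σ i, G i) → (Σ i, G i) → Prop) : Prop :=
  Equivalence θ ∧
    (∀ x x' y y', θ x x' → θ y y' → θ (pmul p x y) (pmul p x' y')) ∧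
    (∀ x x', θ x x' → θ (pinv x) (pinv x'))

/-- `S_θ`: the pairs of indices related by `θ`. -/
def Srel (θ : (Σ i, G i) → (Σ i, G i) → Prop) (i j : I) : Prop :=
  ∃ (a : G i) (b : G j), θ ⟨i, a⟩ ⟨j, b⟩

/-- `C_θ`. -/
def Crel (θ : (Σ i, G i) → (Σ i, G i) → Prop) (i j : I) : Prop :=
  Srel θ i (i ⊔ j) ∧ Srel θ j (i ⊔ j)

/-- A semilattice congruence on `I`: an equivalence relation compatible with `⊔`. -/
def IsSemilatticeCong {I : Type*} [SemilatticeSup I] (C : I → I → Prop) : Prop :=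
  Equivalence C ∧ ∀ i₁ j₁ i₂ j₂, C i₁ j₁ → C i₂ j₂ → C (i₁ ⊔ i₂) (j₁ ⊔ j₂)

/-!
Multiplying `θ ⟨i,a⟩ ⟨j,b⟩` by its inverse relation gives `θ ⟨i,1⟩ ⟨j,1⟩`, so `S_θ` is just `θ`
restricted to the identities of the groups `G i`. In particular `S_θ` is transitive, hence a
semilattice congruence on `I`, which gives (b), (c) and (d); and (a) follows by multiplying
`θ ⟨i,1⟩ ⟨j,1⟩` on the left by `⟨i,a⟩`.
-/

theorem sigma_mk_one_congr {ι : Type*} {H : ι → Type*} [∀ i, One (H i)] {i j : ι} (h : i = j) :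
    (⟨i, 1⟩ : Σ i, H i) = ⟨j, 1⟩ := by
  subst h; rfl

section PlonkaSum

variable (p : ∀ i j : I, i ≤ j → (G i →* G j))

theorem pmul_mk_one_right (i j : I) (a : G i) :
    pmul p ⟨i, a⟩ ⟨j, 1⟩ = ⟨i ⊔ j, p i (i ⊔ j) le_sup_left a⟩ := by
  simp only [pmul, map_one, mul_one]

theorem pmul_pinv_self (x : Σ i, G i) : pmul p x (pinv x) = ⟨x.1, 1⟩ := by
  rw [pmul, pinv, ← map_mul, mul_inv_cancel, map_one]
  exact sigma_mk_one_congr (sup_idem x.1)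

theorem pmul_mk_one_self (hid : ∀ (i : I) (h : i ≤ i) (a : G i), p i i h a = a)
    (i : I) (a : G i) : pmul p ⟨i, a⟩ ⟨i, 1⟩ = ⟨i, a⟩ := by
  have collapse : ∀ j (e : j = i) (h : i ≤ j), (⟨j, p i j h a⟩ : Σ i, G i) = ⟨i, a⟩ := by
    rintro j rfl h
    rw [hid]
  rw [pmul_mk_one_right]
  exact collapse _ (sup_idem i) _

end PlonkaSum

namespace IsCong

variable {p : ∀ i j : I, i ≤ j → (G i →* G j)} {θ : (Σ i, G i) → (Σ i, G i) → Prop}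

theorem rel_one_of_rel (hθ : IsCong p θ) {x y : Σ i, G i} (h : θ x y) :
    θ ⟨x.1, 1⟩ ⟨y.1, 1⟩ := by
  simpa only [pmul_pinv_self] using hθ.2.1 _ _ _ _ h (hθ.2.2 _ _ h)

theorem srel_iff (hθ : IsCong p θ) {i j : I} : Srel θ i j ↔ θ ⟨i, 1⟩ ⟨j, 1⟩ :=
  ⟨fun ⟨_, _, h⟩ => hθ.rel_one_of_rel h, fun h => ⟨1, 1, h⟩⟩

theorem isSemilatticeCong_srel (hθ : IsCong p θ) : IsSemilatticeCong (Srel θ) := by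
  refine ⟨⟨fun i => ⟨1, 1, hθ.1.refl _⟩, fun ⟨a, b, h⟩ => ⟨b, a, hθ.1.symm h⟩, ?_⟩, ?_⟩
  · intro i j k hij hjk
    rw [hθ.srel_iff] at hij hjk ⊢
    exact hθ.1.trans hij hjk
  · rintro i₁ j₁ i₂ j₂ ⟨a₁, b₁, h₁⟩ ⟨a₂, b₂, h₂⟩
    exact ⟨_, _, hθ.2.1 _ _ _ _ h₁ h₂⟩

theorem srel_sup_right_of_srel_of_srel (hθ : IsCong p θ) {i j k : I}
    (hij : Srel θ i j) (hjk : Srel θ j k) : Srel θ i (i ⊔ k) := by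
  have hsc := hθ.isSemilatticeCong_srel
  simpa only [sup_idem] using hsc.2 i i i k (hsc.1.refl i) (hsc.1.trans hij hjk)

theorem rel_mk_sup_of_srel (hθ : IsCong p θ)
    (hid : ∀ (i : I) (h : i ≤ i) (a : G i), p i i h a = a) {i j : I} (h : Srel θ i j)
    (a : G i) : θ ⟨i, a⟩ ⟨i ⊔ j, p i (i ⊔ j) le_sup_left a⟩ := by
  have := hθ.2.1 _ _ _ _ (hθ.1.refl ⟨i, a⟩) (hθ.srel_iff.1 h)
  rwa [pmul_mk_one_self p hid, pmul_mk_one_right] at this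

end IsCong

theorem Srel_properties_general
    (p : ∀ i j : I, i ≤ j → (G i →* G j))
    (hid : ∀ (i : I) (h : i ≤ i) (a : G i), p i i h a = a)
    (θ : (Σ i, G i) → (Σ i, G i) → Prop) (hθ : IsCong p θ) :
    -- (a)
    (∀ i j : I, Srel θ i j → ∀ a : G i, θ ⟨i, a⟩ ⟨i ⊔ j, p i (i ⊔ j) le_sup_left a⟩) ∧
    -- (b)
    (∀ i : I, Srel θ i i) ∧
    (∀ i j : I, Srel θ i j → Srel θ j i) ∧
    -- (c)
    (∀ i j u v : I, Srel θ i j → Srel θ u v → Srel θ (i ⊔ u) (j ⊔ v)) ∧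
    -- (d)
    (∀ i j k : I, Srel θ i j → Srel θ j k → Srel θ i (i ⊔ k)) := by
  have hsc := hθ.isSemilatticeCong_srel
  exact ⟨fun _ _ h => hθ.rel_mk_sup_of_srel hid h, hsc.1.refl, fun _ _ => hsc.1.symm, hsc.2,
    fun _ _ _ => hθ.srel_sup_right_of_srel_of_srel⟩

/-- Basic properties of `S_θ` for a congruence `θ` on the Płonka sum of a semilattice
direct system of groups: (a) for `(i,j) ∈ S_θ` and `a ∈ G i`, `⟨i,a⟩ θ ⟨i⊔j, p_{i,i⊔j}(a)⟩`;
(b) `S_θ` is reflexive and symmetric; (c) `S_θ` is closed under componentwise joins;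
(d) `S_θ` is upper transitive. -/
theorem Srel_properties
    (p : ∀ i j : I, i ≤ j → (G i →* G j))
    (hid : ∀ (i : I) (h : i ≤ i) (a : G i), p i i h a = a)
    (hcomp : ∀ (i j k : I) (hij : i ≤ j) (hjk : j ≤ k) (a : G i),
      p j k hjk (p i j hij a) = p i k (hij.trans hjk) a)
    (θ : (Σ i, G i) → (Σ i, G i) → Prop) (hθ : IsCong p θ) :
    -- (a)
    (∀ i j : I, Srel θ i j → ∀ a : G i, θ ⟨i, a⟩ ⟨i ⊔ j, p i (i ⊔ j) le_sup_left a⟩) ∧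
    -- (b)
    (∀ i : I, Srel θ i i) ∧
    (∀ i j : I, Srel θ i j → Srel θ j i) ∧
    -- (c)
    (∀ i j u v : I, Srel θ i j → Srel θ u v → Srel θ (i ⊔ u) (j ⊔ v)) ∧
    -- (d)
    (∀ i j k : I, Srel θ i j → Srel θ j k → Srel θ i (i ⊔ k)) :=
  Srel_properties_general p hid θ hθ
end

section
/- Let A be the Płonka sum of a semilattice direct system of groups. Let S be a semilattice congruence on I and, for each i ∈ I, let N i be a normal subgroup of G i, such that: (a) for all i, j ∈ I, a ∈ N i implies p_{i,i⊔j}(a) ∈ N (i⊔j); and (b) for all (i,j) ∈ S and a ∈ G i, p_{i,i⊔j}(a) ∈ N (i⊔j) implies a ∈ N i. Define the relation θ on A by: θ ⟨i,a⟩ ⟨j,b⟩ if and only if (i,j) ∈ S and p_{i,i⊔j}(a) · (p_{j,i⊔j}(b))⁻¹ ∈ N (i⊔j). Then θ is a congruence on A, i.e. an equivalence relation compatible with the multiplication and inversion of A. -/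
/-! Płonka sum of a semilattice direct system of groups.

`I` is a join-semilattice, `G i` are groups, and `p i j h : G i →* G j` (for `h : i ≤ j`)
are the transition homomorphisms. The Płonka sum is the sigma type `Σ i, G i` with
multiplication `⟨i,a⟩·⟨j,b⟩ = ⟨i⊔j, p_{i,i⊔j}(a) · p_{j,i⊔j}(b)⟩` and inversion
`⟨i,a⟩⁻¹ = ⟨i,a⁻¹⟩` (a Clifford semigroup). -/

variable {I : Type*} [SemilatticeSup I] {G : I → Type*} [∀ i, Group (G i)]

/-! Push both elements to a common upper bound `k` of their indices and compare them in
`G k ⧸ N k`. By (a) equality there persists when `k` grows, and by (b) it can be pulled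
back along `k ≤ l` whenever `S k l`. In the quotient groups, reflexivity, symmetry,
transitivity and compatibility with products and inverses are then plain equalities of
cosets; transitivity goes up to `i ⊔ j ⊔ l` and back down to `i ⊔ l`, which are
`S`-related because `S j l`. -/

theorem IsSemilatticeCong.rel_sup_sup {S : I → I → Prop} (hS : IsSemilatticeCong S)
    {j l : I} (h : S j l) (i : I) : S (i ⊔ l) (i ⊔ j ⊔ l) := by
  have hl : S l (j ⊔ l) := by
    simpa using hS.2 _ _ _ _ (hS.1.symm h) (hS.1.refl l)
  simpa [sup_assoc] using hS.2 _ _ _ _ (hS.1.refl i) hl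

/-- The relation `θ`, with `a * b⁻¹ ∈ N k` read as `(a : G k ⧸ N k) = b`; the quotient is by left
cosets, so this reading needs `N k` normal. -/
def CosetRel (p : ∀ i j : I, i ≤ j → (G i →* G j)) (N : ∀ i : I, Subgroup (G i))
    (S : I → I → Prop) (x y : Σ i, G i) : Prop :=
  S x.1 y.1 ∧ (p x.1 (x.1 ⊔ y.1) le_sup_left x.2 : G (x.1 ⊔ y.1) ⧸ N (x.1 ⊔ y.1)) =
    p y.1 (x.1 ⊔ y.1) le_sup_right y.2

theorem CosetRel.pinv {p : ∀ i j : I, i ≤ j → (G i →* G j)} {N : ∀ i : I, Subgroup (G i)}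
    [∀ i, (N i).Normal] {S : I → I → Prop} {x y : Σ i, G i} (h : CosetRel p N S x y) :
    CosetRel p N S (pinv x) (pinv y) := by
  have h₂ := congrArg Inv.inv h.2
  rw [← QuotientGroup.mk_inv, ← QuotientGroup.mk_inv, ← map_inv, ← map_inv] at h₂
  exact ⟨h.1, h₂⟩

section DirectSystem

variable (p : ∀ i j : I, i ≤ j → (G i →* G j)) (N : ∀ i : I, Subgroup (G i))

theorem map_mem_iff_of_eq {i k l : I} (e : k = l) (hk : i ≤ k) (hl : i ≤ l) (a : G i) :
    p i k hk a ∈ N k ↔ p i l hl a ∈ N l := by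
  subst e; rfl

variable {p N}

theorem map_mem_of_le
    (ha : ∀ (i j : I) (a : G i), a ∈ N i → p i (i ⊔ j) le_sup_left a ∈ N (i ⊔ j))
    {i j : I} (h : i ≤ j) {a : G i} (hmem : a ∈ N i) : p i j h a ∈ N j :=
  (map_mem_iff_of_eq p N (sup_eq_right.2 h) _ _ a).1 (ha i j a hmem)

theorem mem_of_map_mem_of_le {S : I → I → Prop}
    (hb : ∀ i j : I, S i j → ∀ a : G i, p i (i ⊔ j) le_sup_left a ∈ N (i ⊔ j) → a ∈ N i)
    {i j : I} (hS : S i j) (h : i ≤ j) {a : G i} (hmem : p i j h a ∈ N j) : a ∈ N i :=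
  hb i j hS a ((map_mem_iff_of_eq p N (sup_eq_right.2 h) _ _ a).2 hmem)

variable (hcomp : ∀ (i j k : I) (hij : i ≤ j) (hjk : j ≤ k) (a : G i),
  p j k hjk (p i j hij a) = p i k (hij.trans hjk) a)
include hcomp

theorem map_inv_mul_map_map {i j k l : I} (hik : i ≤ k) (hjk : j ≤ k) (hkl : k ≤ l)
    (a : G i) (b : G j) :
    p k l hkl ((p i k hik a)⁻¹ * p j k hjk b) =
      (p i l (hik.trans hkl) a)⁻¹ * p j l (hjk.trans hkl) b := by
  rw [map_mul, map_inv, hcomp, hcomp]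

theorem coe_map_eq_of_le
    (ha : ∀ (i j : I) (a : G i), a ∈ N i → p i (i ⊔ j) le_sup_left a ∈ N (i ⊔ j))
    {i j k l : I} (hik : i ≤ k) (hjk : j ≤ k) (hkl : k ≤ l) {a : G i} {b : G j}
    (h : (p i k hik a : G k ⧸ N k) = p j k hjk b) :
    (p i l (hik.trans hkl) a : G l ⧸ N l) = p j l (hjk.trans hkl) b := by
  rw [QuotientGroup.eq] at h ⊢
  rw [← map_inv_mul_map_map hcomp hik hjk]
  exact map_mem_of_le ha hkl h

theorem coe_map_eq_of_rel {S : I → I → Prop}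
    (hb : ∀ i j : I, S i j → ∀ a : G i, p i (i ⊔ j) le_sup_left a ∈ N (i ⊔ j) → a ∈ N i)
    {i j k l : I} (hik : i ≤ k) (hjk : j ≤ k) (hkl : k ≤ l) (hS : S k l) {a : G i} {b : G j}
    (h : (p i l (hik.trans hkl) a : G l ⧸ N l) = p j l (hjk.trans hkl) b) :
    (p i k hik a : G k ⧸ N k) = p j k hjk b := by
  rw [QuotientGroup.eq] at h ⊢
  rw [← map_inv_mul_map_map hcomp hik hjk hkl] at h
  exact mem_of_map_mem_of_le hb hS hkl h

theorem map_pmul {x y : Σ i, G i} {k : I} (h : (pmul p x y).1 ≤ k) :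
    p (pmul p x y).1 k h (pmul p x y).2 =
      p x.1 k (le_sup_left.trans h) x.2 * p y.1 k (le_sup_right.trans h) y.2 :=
  (map_mul _ _ _).trans (congrArg₂ (· * ·) (hcomp _ _ _ _ h _) (hcomp _ _ _ _ h _))

end DirectSystem

section CosetRel

variable {p : ∀ i j : I, i ≤ j → (G i →* G j)} {N : ∀ i : I, Subgroup (G i)} {S : I → I → Prop}
  (hcomp : ∀ (i j k : I) (hij : i ≤ j) (hjk : j ≤ k) (a : G i),
    p j k hjk (p i j hij a) = p i k (hij.trans hjk) a)
  (ha : ∀ (i j : I) (a : G i), a ∈ N i → p i (i ⊔ j) le_sup_left a ∈ N (i ⊔ j))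
  (hS : IsSemilatticeCong S)
include hcomp ha hS

theorem CosetRel.symm {x y : Σ i, G i} (h : CosetRel p N S x y) : CosetRel p N S y x :=
  ⟨hS.1.symm h.1, (coe_map_eq_of_le hcomp ha _ _ (sup_comm x.1 y.1).le h.2).symm⟩

theorem CosetRel.trans
    (hb : ∀ i j : I, S i j → ∀ a : G i, p i (i ⊔ j) le_sup_left a ∈ N (i ⊔ j) → a ∈ N i)
    {x y z : Σ i, G i} (hxy : CosetRel p N S x y) (hyz : CosetRel p N S y z) :
    CosetRel p N S x z := by
  have h₁ := coe_map_eq_of_le hcomp ha _ _ (le_sup_left : x.1 ⊔ y.1 ≤ x.1 ⊔ y.1 ⊔ z.1) hxy.2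
  have h₂ := coe_map_eq_of_le hcomp ha _ _
    (sup_le_sup_right le_sup_right z.1 : y.1 ⊔ z.1 ≤ x.1 ⊔ y.1 ⊔ z.1) hyz.2
  exact ⟨hS.1.trans hxy.1 hyz.1, coe_map_eq_of_rel hcomp hb _ _
    (sup_le_sup_right le_sup_left z.1) (hS.rel_sup_sup hyz.1 x.1) (h₁.trans h₂)⟩

theorem CosetRel.pmul [∀ i, (N i).Normal] {x x' y y' : Σ i, G i}
    (hx : CosetRel p N S x x') (hy : CosetRel p N S y y') :
    CosetRel p N S (pmul p x y) (pmul p x' y') := by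
  refine ⟨hS.2 _ _ _ _ hx.1 hy.1, ?_⟩
  have h₁ := coe_map_eq_of_le hcomp ha _ _
    (sup_le_sup le_sup_left le_sup_left : x.1 ⊔ x'.1 ≤ x.1 ⊔ y.1 ⊔ (x'.1 ⊔ y'.1)) hx.2
  have h₂ := coe_map_eq_of_le hcomp ha _ _
    (sup_le_sup le_sup_right le_sup_right : y.1 ⊔ y'.1 ≤ x.1 ⊔ y.1 ⊔ (x'.1 ⊔ y'.1)) hy.2
  rw [map_pmul hcomp, map_pmul hcomp, QuotientGroup.mk_mul, QuotientGroup.mk_mul]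
  exact congrArg₂ (· * ·) h₁ h₂

end CosetRel

theorem congruence_from_normal_subgroups_general
    (p : ∀ i j : I, i ≤ j → (G i →* G j))
    (hcomp : ∀ (i j k : I) (hij : i ≤ j) (hjk : j ≤ k) (a : G i),
      p j k hjk (p i j hij a) = p i k (hij.trans hjk) a)
    (S : I → I → Prop) (hS : IsSemilatticeCong S)
    (N : ∀ i : I, Subgroup (G i)) (hN : ∀ i : I, (N i).Normal)
    (ha : ∀ (i j : I) (a : G i), a ∈ N i → p i (i ⊔ j) le_sup_left a ∈ N (i ⊔ j))
    (hb : ∀ i j : I, S i j → ∀ a : G i,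
      p i (i ⊔ j) le_sup_left a ∈ N (i ⊔ j) → a ∈ N i) :
    IsCong p (fun x y => S x.1 y.1 ∧
      p x.1 (x.1 ⊔ y.1) le_sup_left x.2 * (p y.1 (x.1 ⊔ y.1) le_sup_right y.2)⁻¹
        ∈ N (x.1 ⊔ y.1)) := by
  have : ∀ i, (N i).Normal := hN
  simp only [← div_eq_mul_inv, ← QuotientGroup.eq_iff_div_mem]
  change IsCong p (CosetRel p N S)
  exact ⟨⟨fun x => ⟨hS.1.refl _, rfl⟩, fun h => h.symm hcomp ha hS,
    fun h₁ h₂ => h₁.trans hcomp ha hS hb h₂⟩,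
    fun _ _ _ _ hx hy => hx.pmul hcomp ha hS hy, fun _ _ h => h.pinv⟩

/-- Construction of congruences on the Płonka sum of a semilattice direct system of
groups: given a semilattice congruence `S` on `I` and normal subgroups `N i ⊴ G i`
compatible with the transition maps as in (a), (b), the relation
`θ ⟨i,a⟩ ⟨j,b⟩ ↔ (i,j) ∈ S ∧ p_{i,i⊔j}(a)·(p_{j,i⊔j}(b))⁻¹ ∈ N (i⊔j)` is a congruence. -/
theorem congruence_from_normal_subgroups
    (p : ∀ i j : I, i ≤ j → (G i →* G j))
    (hid : ∀ (i : I) (h : i ≤ i) (a : G i), p i i h a = a)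
    (hcomp : ∀ (i j k : I) (hij : i ≤ j) (hjk : j ≤ k) (a : G i),
      p j k hjk (p i j hij a) = p i k (hij.trans hjk) a)
    (S : I → I → Prop) (hS : IsSemilatticeCong S)
    (N : ∀ i : I, Subgroup (G i)) (hN : ∀ i : I, (N i).Normal)
    (ha : ∀ (i j : I) (a : G i), a ∈ N i → p i (i ⊔ j) le_sup_left a ∈ N (i ⊔ j))
    (hb : ∀ i j : I, S i j → ∀ a : G i,
      p i (i ⊔ j) le_sup_left a ∈ N (i ⊔ j) → a ∈ N i) :
    IsCong p (fun x y => S x.1 y.1 ∧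
      p x.1 (x.1 ⊔ y.1) le_sup_left x.2 * (p y.1 (x.1 ⊔ y.1) le_sup_right y.2)⁻¹
        ∈ N (x.1 ⊔ y.1)) :=
  congruence_from_normal_subgroups_general p hcomp S hS N hN ha hb
end

section
/- Let A be the Płonka sum of a semilattice direct system of groups, let B be a group, fix i ∈ I, and let g : G i →* B be a group homomorphism. Define h : A → WithZero B by h ⟨j,a⟩ = ↑(g (p_{j,i}(a))) if j ≤ i, and h ⟨j,a⟩ = 0 otherwise. Then h extends g (h ⟨i,a⟩ = ↑(g a) for a ∈ G i) and h is a homomorphism, i.e. h (x · y) = h x · h y and h (x⁻¹) = (h x)⁻¹ for all x, y ∈ A, where WithZero B carries its group-with-zero structure (the coerced multiplication of B with 0 absorbing, and 0⁻¹ = 0). -/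
/-! Płonka sum of a semilattice direct system of groups.

`I` is a join-semilattice, `G i` are groups, and `p i j h : G i →* G j` (for `h : i ≤ j`)
are the transition homomorphisms. The Płonka sum is the sigma type `Σ i, G i` with
multiplication `⟨i,a⟩·⟨j,b⟩ = ⟨i⊔j, p_{i,i⊔j}(a) · p_{j,i⊔j}(b)⟩` and inversion
`⟨i,a⟩⁻¹ = ⟨i,a⁻¹⟩` (a Clifford semigroup). -/

variable {I : Type*} [SemilatticeSup I] {G : I → Type*} [∀ i, Group (G i)]

open scoped Classical in
/-- The extension of a homomorphism `g : G i →* B` to the whole Płonka sum, with values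
in `B` with an absorbing zero adjoined (the algebra `B*`): `h ⟨j,a⟩ = g (p_{j,i}(a))` if
`j ≤ i`, and `h ⟨j,a⟩ = 0` otherwise. -/
noncomputable def hext (p : ∀ i j : I, i ≤ j → (G i →* G j)) {B : Type*} [Group B]
    (i : I) (g : G i →* B) (x : Σ j, G j) : WithZero B :=
  if h : x.1 ≤ i then ((g (p x.1 i h x.2) : B) : WithZero B) else 0
/- `hext` is supported on the down-set `{j | j ≤ i}`, and `j ⊔ k ≤ i` holds exactly when both
`j ≤ i` and `k ≤ i`; so a product lands outside the support iff a factor does, and both sides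
are then `0`. Inside the support, `hcomp` routes both factors of `⟨j,a⟩·⟨k,b⟩` through `j ⊔ k`
to `i`, where `g ∘ p_{j⊔k,i}` is a homomorphism. -/

section Extension

variable (p : ∀ i j : I, i ≤ j → (G i →* G j)) {B : Type*} [Group B] {i : I} (g : G i →* B)

theorem hext_of_le {x : Σ j, G j} (hx : x.1 ≤ i) :
    hext p i g x = ((g (p x.1 i hx x.2) : B) : WithZero B) := by
  rw [hext, dif_pos hx]

theorem hext_of_not_le {x : Σ j, G j} (hx : ¬ x.1 ≤ i) : hext p i g x = 0 := by
  rw [hext, dif_neg hx]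

theorem hext_mk_self (hid : ∀ (i : I) (h : i ≤ i) (a : G i), p i i h a = a) (a : G i) :
    hext p i g ⟨i, a⟩ = ((g a : B) : WithZero B) := by
  rw [hext_of_le p g le_rfl, hid]

theorem hext_pmul
    (hcomp : ∀ (i j k : I) (hij : i ≤ j) (hjk : j ≤ k) (a : G i),
      p j k hjk (p i j hij a) = p i k (hij.trans hjk) a)
    (x y : Σ j, G j) : hext p i g (pmul p x y) = hext p i g x * hext p i g y := by
  by_cases hx : x.1 ≤ i
  · by_cases hy : y.1 ≤ i
    · change hext p i g ⟨x.1 ⊔ y.1, p x.1 _ le_sup_left x.2 * p y.1 _ le_sup_right y.2⟩ = _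
      rw [hext_of_le p g (sup_le hx hy), hext_of_le p g hx, hext_of_le p g hy]
      dsimp only
      rw [map_mul, map_mul, hcomp, hcomp, WithZero.coe_mul]
    · rw [hext_of_not_le p g (x := pmul p x y) fun h => hy (le_sup_right.trans h),
        hext_of_not_le p g hy, mul_zero]
  · rw [hext_of_not_le p g (x := pmul p x y) fun h => hx (le_sup_left.trans h),
      hext_of_not_le p g hx, zero_mul]

theorem hext_pinv (x : Σ j, G j) : hext p i g (pinv x) = (hext p i g x)⁻¹ := by
  by_cases hx : x.1 ≤ i
  · rw [hext_of_le p g (x := pinv x) hx, hext_of_le p g hx, ← WithZero.coe_inv, ← map_inv,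
      ← map_inv]
    rfl
  · rw [hext_of_not_le p g (x := pinv x) hx, hext_of_not_le p g hx, inv_zero]

end Extension

/-- The extension lemma: `hext p i g` extends `g` and is a homomorphism from the Płonka
sum to `B*` (i.e. `WithZero B` with its group-with-zero structure). -/
theorem hext_extends_and_is_hom
    (p : ∀ i j : I, i ≤ j → (G i →* G j))
    (hid : ∀ (i : I) (h : i ≤ i) (a : G i), p i i h a = a)
    (hcomp : ∀ (i j k : I) (hij : i ≤ j) (hjk : j ≤ k) (a : G i),
      p j k hjk (p i j hij a) = p i k (hij.trans hjk) a)
    {B : Type*} [Group B] (i : I) (g : G i →* B) :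
    (∀ a : G i, hext p i g ⟨i, a⟩ = ((g a : B) : WithZero B)) ∧
    (∀ x y : Σ j, G j, hext p i g (pmul p x y) = hext p i g x * hext p i g y) ∧
    (∀ x : Σ j, G j, hext p i g (pinv x) = (hext p i g x)⁻¹) :=
  ⟨hext_mk_self p g hid, hext_pmul p g hcomp, hext_pinv p g⟩
end
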